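/- Under the standing hypotheses, the subrings of invariants R^α and T^β are isomorphic as rings; an isomorphism R^α → T^β is given by x ↦ Σ_{e∈G₀} ψ_e(x), where for each e ∈ G₀ with X_e = {h ∈ G : r(h) = e} enumerated as {g_{1,e} = e, g_{2,e}, …, g_{n_e,e}}, ψ_e : T → E_e is the ring homomorphism ψ_e(a) = Σ_{1≤l≤n_e} Σ_{i_1≤…≤i_l} (−1)^{l+1} β_{g_{i_1,e}}(1_{d(g_{i_1,e})})⋯β_{g_{i_l,e}}(1_{d(g_{i_l,e})})·β_{g_{i_l,e}}(a_{d(g_{i_l,e})}); the inverse isomorphism T^β → R^α is multiplication by 1_R. -/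

import Mathlib

universe u

/-- A groupoid in the algebraic sense of Lawson: a non-empty set `G` with a
partially defined binary operation (here modeled by a total operation `mul`
whose value is only constrained when it is defined, i.e. when `d g = r h`),
an inversion `inv`, and domain/range maps `d`, `r`. -/
structure AlgGroupoid (G : Type u) where
  mul : G → G → G
  inv : G → G
  d : G → G
  r : G → G
  mul_assoc' : ∀ g h l, d g = r h → d h = r l → mul (mul g h) l = mul g (mul h l)
  mul_d : ∀ g, mul g (d g) = g
  r_mul : ∀ g, mul (r g) g = g
  inv_mul : ∀ g, mul (inv g) g = d g
  mul_inv : ∀ g, mul g (inv g) = r g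
  d_mul : ∀ g h, d g = r h → d (mul g h) = d h
  r_mul' : ∀ g h, d g = r h → r (mul g h) = r g
  d_inv : ∀ g, d (inv g) = r g
  r_inv : ∀ g, r (inv g) = d g
  inv_inv : ∀ g, inv (inv g) = g
  d_d : ∀ g, d (d g) = d g
  r_d : ∀ g, r (d g) = d g
  d_r : ∀ g, d (r g) = r g
  r_r : ∀ g, r (r g) = r g

/-- `e` is an identity element of the groupoid `𝔾`, i.e. an element of `G₀`. -/
def AlgGroupoid.isId {G : Type u} (𝔾 : AlgGroupoid G) (e : G) : Prop := 𝔾.d e = e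

instance {G : Type u} [DecidableEq G] (𝔾 : AlgGroupoid G) (e : G) : Decidable (𝔾.isId e) :=
  inferInstanceAs (Decidable (𝔾.d e = e))

/-- `D` is a two-sided ideal of `E` (both being subsets of an ambient
non-unital ring `T`). -/
structure IsIdealIn {T : Type u} [NonUnitalRing T] (D E : Set T) : Prop where
  subset : D ⊆ E
  zero_mem : (0 : T) ∈ D
  add_mem : ∀ ⦃x y : T⦄, x ∈ D → y ∈ D → x + y ∈ D
  neg_mem : ∀ ⦃x : T⦄, x ∈ D → -x ∈ D
  mul_mem_left : ∀ ⦃x y : T⦄, x ∈ E → y ∈ D → x * y ∈ D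
  mul_mem_right : ∀ ⦃x y : T⦄, x ∈ D → y ∈ E → x * y ∈ D

/-- `u` is a (two-sided) multiplicative identity element of the subset `D`. -/
def IsIdentityElem {T : Type u} [NonUnitalRing T] (u : T) (D : Set T) : Prop :=
  u ∈ D ∧ ∀ x ∈ D, u * x = x ∧ x * u = x

/-- A partial action `α = ({D_g}, {α_g})` of a groupoid `𝔾` on the ring whose
carrier is the subset `R` of the ambient non-unital ring `T` (take
`R = Set.univ` for a partial action on `T` itself).  For each `g`, `D (r g)`
is an ideal of `R`, `D g` is an ideal of `D (r g)` and `act g` restricts to a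
ring isomorphism from `D (inv g)` onto `D g`; moreover `act e` is the identity
of `D e` for identities `e`, and for composable `g, h` the map `act (mul g h)`
extends `act g ∘ act h` (whose domain is `(act h)⁻¹ (D (inv g) ∩ D h)`). -/
structure PartialGroupoidAction {G : Type u} (𝔾 : AlgGroupoid G) (T : Type u)
    [NonUnitalRing T] (R : Set T) where
  D : G → Set T
  act : G → T → T
  ideal_r : ∀ g, IsIdealIn (D (𝔾.r g)) R
  ideal : ∀ g, IsIdealIn (D g) (D (𝔾.r g))
  bijOn : ∀ g, Set.BijOn (act g) (D (𝔾.inv g)) (D g)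
  map_add : ∀ g, ∀ x ∈ D (𝔾.inv g), ∀ y ∈ D (𝔾.inv g), act g (x + y) = act g x + act g y
  map_mul : ∀ g, ∀ x ∈ D (𝔾.inv g), ∀ y ∈ D (𝔾.inv g), act g (x * y) = act g x * act g y
  act_id : ∀ e, 𝔾.isId e → ∀ x ∈ D e, act e x = x
  dom_cond : ∀ g h, 𝔾.d g = 𝔾.r h → ∀ x ∈ D (𝔾.inv h), act h x ∈ D (𝔾.inv g) →
    x ∈ D (𝔾.inv (𝔾.mul g h))
  comp_cond : ∀ g h, 𝔾.d g = 𝔾.r h → ∀ x ∈ D (𝔾.inv h), act h x ∈ D (𝔾.inv g) →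
    act g (act h x) = act (𝔾.mul g h) x

/-- The partial action `α` is global if, for all composable `g, h`, the
composite `α_g ∘ α_h` (taken on its largest possible domain) coincides with
`α_{gh}`; since both maps always agree on the domain of the composite, this
amounts to the equality of the two domains. -/
def PartialGroupoidAction.IsGlobal {G : Type u} {𝔾 : AlgGroupoid G} {T : Type u}
    [NonUnitalRing T] {R : Set T} (α : PartialGroupoidAction 𝔾 T R) : Prop :=
  ∀ g h, 𝔾.d g = 𝔾.r h →
    {x | x ∈ α.D (𝔾.inv h) ∧ α.act h x ∈ α.D (𝔾.inv g)} = α.D (𝔾.inv (𝔾.mul g h))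

/-!
Put `1_R = ∑_{e ∈ G₀} 1_e` and `φ a = a·1_R`. Call `a ∈ T` a lift of `x` if
`a·β_k(y) = β_k(x·y)` for every `k` and `y ∈ D_{d k}`. The sets `β_k(D_{d k})` generate every
`E_e` additively and `1_T = ∑ 1_{E_e}`, so a lift is unique. Every `a ∈ T^β` is a lift of `a·1_R`,
and every lift of some `x` lies in `T^β` and satisfies `a·1_R = x·1_R`. Hence `φ : T^β → R^α` is
injective, and it is onto because an invariant `x` has a lift: the `β_k(x·1_{d k})` form a
compatible family over the commuting idempotents `β_k(1_{d k})`, which glues by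
inclusion–exclusion (the paper's formula for `ψ_e`). The isomorphism is `ψ = φ⁻¹`.
-/

open Function Set

lemma exists_mul_eq_of_compatible {R ι : Type*} [Ring R] (s : Finset ι) {u v : ι → R}
    (hu : ∀ i ∈ s, IsIdempotentElem (u i)) (hcomm : ∀ i ∈ s, ∀ j ∈ s, Commute (u i) (u j))
    (hvu : ∀ i ∈ s, v i * u i = v i) (hv : ∀ i ∈ s, ∀ j ∈ s, v i * u j = v j * u i) :
    ∃ a, ∀ i ∈ s, a * u i = v i := by
  induction s using Finset.cons_induction with
  | empty => exact ⟨0, by simp⟩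
  | cons i s _ ih =>
    simp only [Finset.forall_mem_cons] at hu hcomm hvu hv ⊢
    obtain ⟨a, ha⟩ := ih hu.2 (fun j hj => (hcomm.2 j hj).2) hvu.2 (fun j hj => (hv.2 j hj).2)
    refine ⟨v i + a * (1 - u i), ?_, fun j hj => ?_⟩
    · rw [add_mul, mul_assoc, sub_mul, one_mul, hu.1.eq, sub_self, mul_zero, add_zero, hvu.1]
    · have hcomm' : Commute (1 - u i) (u j) := (Commute.one_left _).sub_left (hcomm.1.2 j hj)
      rw [add_mul, mul_assoc, hcomm'.eq, ← mul_assoc, ha j hj, mul_sub, mul_one,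
        ← (hv.2 j hj).1]
      abel

namespace AlgGroupoid

variable {G : Type u} (𝔾 : AlgGroupoid G)

def identities [Fintype G] [DecidableEq G] : Finset G :=
  Finset.univ.filter fun e => 𝔾.isId e

@[simp]
lemma mem_identities [Fintype G] [DecidableEq G] {e : G} : e ∈ 𝔾.identities ↔ 𝔾.isId e := by
  simp [identities]

lemma isId_d (g : G) : 𝔾.isId (𝔾.d g) := 𝔾.d_d g

lemma isId_r (g : G) : 𝔾.isId (𝔾.r g) := 𝔾.d_r g

variable {𝔾}

lemma isId.r_eq {e : G} (he : 𝔾.isId e) : 𝔾.r e = e := by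
  have h := 𝔾.r_d e
  rwa [he] at h

lemma isId.inv_eq {e : G} (he : 𝔾.isId e) : 𝔾.inv e = e := by
  have h := 𝔾.mul_d (𝔾.inv e)
  rw [𝔾.d_inv, he.r_eq] at h
  rw [← h, 𝔾.inv_mul, he]

lemma mul_inv_mul_cancel {g k : G} (h : 𝔾.r k = 𝔾.r g) :
    𝔾.mul g (𝔾.mul (𝔾.inv g) k) = k := by
  rw [← 𝔾.mul_assoc' _ _ _ (𝔾.r_inv g).symm (by rw [𝔾.d_inv, h]), 𝔾.mul_inv, ← h, 𝔾.r_mul]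

lemma r_inv_mul {g k : G} (h : 𝔾.r k = 𝔾.r g) : 𝔾.r (𝔾.mul (𝔾.inv g) k) = 𝔾.d g := by
  rw [𝔾.r_mul' _ _ (by rw [𝔾.d_inv, h]), 𝔾.r_inv]

lemma d_inv_mul {g k : G} (h : 𝔾.r k = 𝔾.r g) : 𝔾.d (𝔾.mul (𝔾.inv g) k) = 𝔾.d k :=
  𝔾.d_mul _ _ (by rw [𝔾.d_inv, h])

lemma inv_eq_of_mul_eq {p q : G} (hqp : 𝔾.r q = 𝔾.d p) (hpq : 𝔾.mul p q = 𝔾.r p) :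
    𝔾.inv p = q := by
  calc 𝔾.inv p = 𝔾.mul (𝔾.inv p) (𝔾.mul p q) := by rw [hpq, ← 𝔾.d_inv, 𝔾.mul_d]
    _ = q := by rw [← 𝔾.mul_assoc' _ _ _ (𝔾.d_inv p) hqp.symm, 𝔾.inv_mul, ← hqp, 𝔾.r_mul]

lemma inv_inv_mul {g k : G} (h : 𝔾.r k = 𝔾.r g) :
    𝔾.inv (𝔾.mul (𝔾.inv g) k) = 𝔾.mul (𝔾.inv k) g := by
  refine inv_eq_of_mul_eq (by rw [r_inv_mul h.symm, d_inv_mul h]) ?_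
  rw [𝔾.mul_assoc' _ _ _ (by rw [𝔾.d_inv, h]) (by rw [r_inv_mul h.symm]),
    mul_inv_mul_cancel h.symm, 𝔾.inv_mul, r_inv_mul h]

end AlgGroupoid

namespace PartialGroupoidAction

variable {G : Type u} {𝔾 : AlgGroupoid G} {T : Type u}

def invariants [NonUnitalRing T] {R : Set T} (α : PartialGroupoidAction 𝔾 T R) (oneD : G → T) :
    Set T :=
  R ∩ {x | ∀ g, α.act g (x * oneD (𝔾.inv g)) = x * oneD g}

def globalInvariants [NonUnitalRing T] (β : PartialGroupoidAction 𝔾 T Set.univ)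
    (oneE : G → T) : Set T :=
  {a | ∀ g, β.act g (a * oneE (𝔾.d g)) = a * oneE (𝔾.r g)}

lemma act_eq_of_isIdentityElem [NonUnitalRing T] {R : Set T} (α : PartialGroupoidAction 𝔾 T R)
    {g : G} {v w : T} (hv : IsIdentityElem v (α.D (𝔾.inv g))) (hw : IsIdentityElem w (α.D g)) :
    α.act g v = w := by
  obtain ⟨y, hy, rfl⟩ := (α.bijOn g).surjOn hw.1
  calc α.act g v = α.act g y * α.act g v := (hw.2 _ ((α.bijOn g).mapsTo hv.1)).1.symm
    _ = α.act g y := by rw [← α.map_mul g y hy v hv.1, (hv.2 y hy).2]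

variable [Ring T] {β : PartialGroupoidAction 𝔾 T Set.univ}

namespace IsGlobal

variable (hβ : β.IsGlobal)
include hβ

lemma D_eq (g : G) : β.D g = β.D (𝔾.r g) := by
  refine (β.ideal g).subset.antisymm fun y hy => ?_
  have h := hβ g (𝔾.inv g) (𝔾.r_inv g).symm
  rw [𝔾.mul_inv, (𝔾.isId_r g).inv_eq] at h
  simpa only [𝔾.inv_inv] using ((Set.ext_iff.mp h y).2 hy).1

lemma D_inv_eq (g : G) : β.D (𝔾.inv g) = β.D (𝔾.d g) := by
  rw [hβ.D_eq, 𝔾.r_inv]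

lemma mul_mem_left {g : G} (t : T) {z : T} (hz : z ∈ β.D g) : t * z ∈ β.D g := by
  rw [hβ.D_eq] at hz ⊢
  exact (β.ideal_r g).mul_mem_left (Set.mem_univ t) hz

lemma act_mem {g : G} {z : T} (hz : z ∈ β.D (𝔾.d g)) : β.act g z ∈ β.D (𝔾.r g) := by
  rw [← hβ.D_eq]
  exact (β.bijOn g).mapsTo (by rwa [hβ.D_inv_eq])

lemma act_add {g : G} {x y : T} (hx : x ∈ β.D (𝔾.d g)) (hy : y ∈ β.D (𝔾.d g)) :
    β.act g (x + y) = β.act g x + β.act g y :=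
  β.map_add g x (by rwa [hβ.D_inv_eq]) y (by rwa [hβ.D_inv_eq])

lemma act_mul {g : G} {x y : T} (hx : x ∈ β.D (𝔾.d g)) (hy : y ∈ β.D (𝔾.d g)) :
    β.act g (x * y) = β.act g x * β.act g y :=
  β.map_mul g x (by rwa [hβ.D_inv_eq]) y (by rwa [hβ.D_inv_eq])

lemma act_act {g h : G} (hgh : 𝔾.d g = 𝔾.r h) {z : T} (hz : z ∈ β.D (𝔾.d h)) :
    β.act g (β.act h z) = β.act (𝔾.mul g h) z :=
  β.comp_cond g h hgh z (by rwa [hβ.D_inv_eq]) (by rw [hβ.D_inv_eq, hgh]; exact hβ.act_mem hz)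

end IsGlobal

end PartialGroupoidAction

structure IsGlobalization {G : Type u} [Fintype G] [DecidableEq G] {𝔾 : AlgGroupoid G}
    {T : Type u} [Ring T] {Rset : Set T} (α : PartialGroupoidAction 𝔾 T Rset)
    (β : PartialGroupoidAction 𝔾 T Set.univ) (oneD oneE : G → T) : Prop where
  isGlobal : β.IsGlobal
  isIdealIn : ∀ e, 𝔾.isId e → IsIdealIn (α.D e) (β.D e)
  D_eq : ∀ g, α.D g = α.D (𝔾.r g) ∩ (β.act g '' α.D (𝔾.d g))
  act_eq : ∀ g, ∀ a ∈ α.D (𝔾.inv g), β.act g a = α.act g a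
  D_eq_closure : ∀ g, β.D g
    = ↑(AddSubgroup.closure (⋃ h ∈ {h : G | 𝔾.r h = 𝔾.r g}, β.act h '' α.D (𝔾.d h)))
  oneD_spec : ∀ g, IsIdentityElem (oneD g) (α.D g)
  oneE_spec : ∀ g, IsIdentityElem (oneE g) (β.D g)
  oneD_comm : ∀ g (t : T), oneD g * t = t * oneD g
  mul_eq_zero : ∀ e f, 𝔾.isId e → 𝔾.isId f → e ≠ f → ∀ x ∈ β.D e, ∀ y ∈ β.D f, x * y = 0
  one_eq_sum : (1 : T) = ∑ e ∈ 𝔾.identities, oneE e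

def IsGlobalLift {G : Type u} {𝔾 : AlgGroupoid G} {T : Type u} [Ring T] {Rset : Set T}
    (α : PartialGroupoidAction 𝔾 T Rset) (β : PartialGroupoidAction 𝔾 T Set.univ) (a x : T) :
    Prop :=
  ∀ k, ∀ y ∈ α.D (𝔾.d k), a * β.act k y = β.act k (x * y)

namespace IsGlobalization

open AlgGroupoid PartialGroupoidAction

variable {G : Type u} [Fintype G] [DecidableEq G] {𝔾 : AlgGroupoid G} {T : Type u} [Ring T]
  {Rset : Set T} {α : PartialGroupoidAction 𝔾 T Rset} {β : PartialGroupoidAction 𝔾 T Set.univ}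
  {oneD oneE : G → T} (H : IsGlobalization α β oneD oneE)
include H

lemma D_subset (g : G) : α.D g ⊆ β.D (𝔾.r g) :=
  (α.ideal g).subset.trans (H.isIdealIn _ (𝔾.isId_r g)).subset

lemma D_d_subset (g : G) : α.D (𝔾.d g) ⊆ β.D (𝔾.d g) :=
  (H.isIdealIn _ (𝔾.isId_d g)).subset

lemma oneD_mem_of_isId {e : G} (he : 𝔾.isId e) : oneD e ∈ β.D e := by
  simpa only [he.r_eq] using H.D_subset e (H.oneD_spec e).1

lemma oneD_mem_d (g : G) : oneD (𝔾.d g) ∈ β.D (𝔾.d g) :=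
  H.oneD_mem_of_isId (𝔾.isId_d g)

lemma mul_eq_zero_of_r_ne {g k : G} (hne : 𝔾.r g ≠ 𝔾.r k) {x y : T} (hx : x ∈ β.D (𝔾.r g))
    (hy : y ∈ β.D (𝔾.r k)) : x * y = 0 :=
  H.mul_eq_zero _ _ (𝔾.isId_r g) (𝔾.isId_r k) hne x hx y hy

lemma mul_oneD_mem (t : T) (g : G) : t * oneD g ∈ α.D g := by
  have hg : oneD g ∈ α.D (𝔾.r g) := (α.ideal g).subset (H.oneD_spec g).1
  have hE : t * oneE (𝔾.r g) ∈ β.D (𝔾.r g) :=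
    (β.ideal_r g).mul_mem_left (Set.mem_univ t) (H.oneE_spec _).1
  have h : t * oneD g = t * oneE (𝔾.r g) * oneD (𝔾.r g) * oneD g := by
    rw [mul_assoc (t * _), ((H.oneD_spec _).2 _ hg).1, mul_assoc,
      ((H.oneE_spec _).2 _ (H.D_subset g (H.oneD_spec g).1)).1]
  rw [h]
  exact (α.ideal g).mul_mem_left
    ((H.isIdealIn _ (𝔾.isId_r g)).mul_mem_left hE (H.oneD_spec _).1) (H.oneD_spec g).1

lemma mul_oneD_inv_mem (t : T) (g : G) : t * oneD (𝔾.inv g) ∈ β.D (𝔾.d g) := by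
  simpa only [𝔾.r_inv] using H.D_subset (𝔾.inv g) (H.mul_oneD_mem t _)

lemma mul_mem_D (t : T) {g : G} {y : T} (hy : y ∈ α.D g) : t * y ∈ α.D g := by
  rw [← ((H.oneD_spec g).2 y hy).1, ← mul_assoc]
  exact (α.ideal g).mul_mem_left ((α.ideal g).subset (H.mul_oneD_mem t g)) hy

lemma act_oneD_inv (g : G) : β.act g (oneD (𝔾.inv g)) = oneD g :=
  (H.act_eq g _ (H.oneD_spec _).1).trans
    (α.act_eq_of_isIdentityElem (H.oneD_spec _) (H.oneD_spec g))

lemma act_oneD_mul_act {k : G} {y : T} (hy : y ∈ α.D (𝔾.d k)) :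
    β.act k (oneD (𝔾.d k)) * β.act k y = β.act k y := by
  rw [← H.isGlobal.act_mul (H.oneD_mem_d k) (H.D_d_subset k hy), ((H.oneD_spec _).2 y hy).1]

lemma act_mul_act_oneD {k : G} {y : T} (hy : y ∈ α.D (𝔾.d k)) :
    β.act k y * β.act k (oneD (𝔾.d k)) = β.act k y := by
  rw [← H.isGlobal.act_mul (H.D_d_subset k hy) (H.oneD_mem_d k), ((H.oneD_spec _).2 y hy).2]

lemma oneD_r_mul_act_oneD (m : G) : oneD (𝔾.r m) * β.act m (oneD (𝔾.d m)) = oneD m := by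
  obtain ⟨z, hz, hz_eq⟩ := (β.bijOn m).surjOn
    (show oneD (𝔾.r m) ∈ β.D m by rw [H.isGlobal.D_eq]; exact H.oneD_mem_of_isId (𝔾.isId_r m))
  rw [H.isGlobal.D_inv_eq] at hz
  have hw : oneD (𝔾.r m) * β.act m (oneD (𝔾.d m)) ∈ α.D m := by
    rw [H.D_eq m]
    refine ⟨(H.isIdealIn _ (𝔾.isId_r m)).mul_mem_right (H.oneD_spec _).1
      (H.isGlobal.act_mem (H.oneD_mem_d m)), z * oneD (𝔾.d m), ?_, ?_⟩
    · exact (H.isIdealIn _ (𝔾.isId_d m)).mul_mem_left hz (H.oneD_spec _).1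
    · rw [H.isGlobal.act_mul hz (H.oneD_mem_d m), hz_eq]
  obtain ⟨-, y, hy, hy_eq⟩ : oneD m ∈ α.D (𝔾.r m) ∩ (β.act m '' α.D (𝔾.d m)) := by
    rw [← H.D_eq m]; exact (H.oneD_spec m).1
  calc oneD (𝔾.r m) * β.act m (oneD (𝔾.d m))
      = oneD m * (oneD (𝔾.r m) * β.act m (oneD (𝔾.d m))) := ((H.oneD_spec m).2 _ hw).1.symm
    _ = oneD m := by
      rw [← mul_assoc, ((H.oneD_spec _).2 _ ((α.ideal m).subset (H.oneD_spec m).1)).2, ← hy_eq,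
        H.act_mul_act_oneD hy]

lemma act_mul_oneD_mul_act_oneD (x : T) {h k : G} (hr : 𝔾.r h = 𝔾.r k) :
    β.act h (x * oneD (𝔾.d h)) * β.act k (oneD (𝔾.d k))
      = β.act h (x * oneD (𝔾.mul (𝔾.inv h) k)) := by
  set m := 𝔾.mul (𝔾.inv h) k
  have hrm : 𝔾.r m = 𝔾.d h := r_inv_mul hr.symm
  have hdm : 𝔾.d m = 𝔾.d k := d_inv_mul hr.symm
  have hu : β.act m (oneD (𝔾.d m)) ∈ β.D (𝔾.d h) := hrm ▸ H.isGlobal.act_mem (H.oneD_mem_d m)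
  have hk : β.act k (oneD (𝔾.d k)) = β.act h (β.act m (oneD (𝔾.d m))) := by
    rw [H.isGlobal.act_act hrm.symm (H.oneD_mem_d m), mul_inv_mul_cancel hr.symm, hdm]
  rw [hk, ← H.isGlobal.act_mul (H.isGlobal.mul_mem_left x (H.oneD_mem_d h)) hu, mul_assoc,
    ← hrm, H.oneD_r_mul_act_oneD]

lemma act_mul_oneD_mul_act_oneD_comm {x : T}
    (hx : ∀ g, β.act g (x * oneD (𝔾.inv g)) = x * oneD g) (h k : G) :
    β.act h (x * oneD (𝔾.d h)) * β.act k (oneD (𝔾.d k))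
      = β.act k (x * oneD (𝔾.d k)) * β.act h (oneD (𝔾.d h)) := by
  by_cases hr : 𝔾.r h = 𝔾.r k
  · rw [H.act_mul_oneD_mul_act_oneD x hr, H.act_mul_oneD_mul_act_oneD x hr.symm, ← hx,
      H.isGlobal.act_act (r_inv_mul hr.symm).symm (H.mul_oneD_inv_mem x _),
      mul_inv_mul_cancel hr.symm, inv_inv_mul hr.symm]
  · rw [H.mul_eq_zero_of_r_ne hr (H.isGlobal.act_mem (H.isGlobal.mul_mem_left x (H.oneD_mem_d h)))
        (H.isGlobal.act_mem (H.oneD_mem_d k)),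
      H.mul_eq_zero_of_r_ne (Ne.symm hr)
        (H.isGlobal.act_mem (H.isGlobal.mul_mem_left x (H.oneD_mem_d k)))
        (H.isGlobal.act_mem (H.oneD_mem_d h))]

lemma eq_of_forall_mul_act_eq {b c : T}
    (h : ∀ k, ∀ y ∈ α.D (𝔾.d k), b * β.act k y = c * β.act k y) : b = c := by
  have hker : ∀ g, β.D g ⊆ (AddMonoidHom.mulLeft (b - c)).ker := by
    intro g
    rw [H.D_eq_closure g, SetLike.coe_subset_coe, AddSubgroup.closure_le]
    intro s hs
    obtain ⟨k, -, y, hy, rfl⟩ := Set.mem_iUnion₂.mp hs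
    simp [sub_mul, h k y hy]
  rw [← sub_eq_zero]
  calc b - c = ∑ e ∈ 𝔾.identities, (b - c) * oneE e := by
        rw [← Finset.mul_sum, ← H.one_eq_sum, mul_one]
    _ = 0 := Finset.sum_eq_zero fun e _ => hker e (H.oneE_spec e).1

lemma sum_oneD_mul {g : G} {y : T} (hy : y ∈ α.D g) : (∑ e ∈ 𝔾.identities, oneD e) * y = y := by
  rw [Finset.sum_mul, Finset.sum_eq_single_of_mem (𝔾.r g) ((mem_identities _).2 (𝔾.isId_r g)),
    ((H.oneD_spec _).2 y ((α.ideal g).subset hy)).1]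
  intro e he hne
  have he := (mem_identities _).1 he
  exact H.mul_eq_zero e (𝔾.r g) he (𝔾.isId_r g) hne _ (H.oneD_mem_of_isId he) _ (H.D_subset g hy)

lemma sum_oneD_mul_self :
    (∑ e ∈ 𝔾.identities, oneD e) * (∑ e ∈ 𝔾.identities, oneD e) = ∑ e ∈ 𝔾.identities, oneD e := by
  rw [Finset.mul_sum]
  exact Finset.sum_congr rfl fun e _ => H.sum_oneD_mul (H.oneD_spec e).1

lemma mul_sum_oneD_mul_mul_sum_oneD (a b : T) :
    a * (∑ e ∈ 𝔾.identities, oneD e) * (b * ∑ e ∈ 𝔾.identities, oneD e)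
      = a * b * ∑ e ∈ 𝔾.identities, oneD e := by
  have hcomm : Commute (∑ e ∈ 𝔾.identities, oneD e) b :=
    Commute.sum_left _ _ _ fun e _ => H.oneD_comm e b
  rw [mul_assoc a, ← mul_assoc _ b, hcomm.eq, mul_assoc b, H.sum_oneD_mul_self, ← mul_assoc]

lemma eq_of_isGlobalLift {a b x : T} (ha : IsGlobalLift α β a x) (hb : IsGlobalLift α β b x) :
    a = b :=
  H.eq_of_forall_mul_act_eq fun k y hy => (ha k y hy).trans (hb k y hy).symm

lemma isGlobalLift_add {a b x y : T} (ha : IsGlobalLift α β a x) (hb : IsGlobalLift α β b y) :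
    IsGlobalLift α β (a + b) (x + y) := fun k z hz => by
  rw [add_mul, ha k z hz, hb k z hz, add_mul, H.isGlobal.act_add (H.D_d_subset k (H.mul_mem_D x hz))
    (H.D_d_subset k (H.mul_mem_D y hz))]

lemma isGlobalLift_mul {a b x y : T} (ha : IsGlobalLift α β a x) (hb : IsGlobalLift α β b y) :
    IsGlobalLift α β (a * b) (x * y) := fun k z hz => by
  rw [mul_assoc, hb k z hz, ha k _ (H.mul_mem_D y hz), mul_assoc]

lemma isGlobalLift_one : IsGlobalLift α β 1 (∑ e ∈ 𝔾.identities, oneD e) := fun k y hy => by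
  rw [one_mul, H.sum_oneD_mul hy]

lemma isGlobalLift_mul_sum_oneD {a : T} (ha : a ∈ β.globalInvariants oneE) :
    IsGlobalLift α β a (a * ∑ e ∈ 𝔾.identities, oneD e) := fun k y hy => by
  have hy' := H.D_d_subset k hy
  calc a * β.act k y = a * oneE (𝔾.r k) * β.act k y := by
        rw [mul_assoc, ((H.oneE_spec _).2 _ (H.isGlobal.act_mem hy')).1]
    _ = β.act k (a * oneE (𝔾.d k) * y) := by
        rw [← ha k, H.isGlobal.act_mul (H.isGlobal.mul_mem_left a (H.oneE_spec _).1) hy']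
    _ = β.act k (a * (∑ e ∈ 𝔾.identities, oneD e) * y) := by
        rw [mul_assoc, ((H.oneE_spec _).2 _ hy').1, mul_assoc, H.sum_oneD_mul hy]

lemma mul_sum_oneD_eq_of_isGlobalLift {a x : T} (ha : IsGlobalLift α β a x) :
    a * ∑ e ∈ 𝔾.identities, oneD e = x * ∑ e ∈ 𝔾.identities, oneD e := by
  simp only [Finset.mul_sum]
  refine Finset.sum_congr rfl fun e he => ?_
  have he := (mem_identities _).1 he
  have h := ha e (oneD e) (by rw [he]; exact (H.oneD_spec e).1)
  rwa [β.act_id e he _ (H.oneD_mem_of_isId he),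
    β.act_id e he _ (H.isGlobal.mul_mem_left x (H.oneD_mem_of_isId he))] at h

lemma mem_globalInvariants_of_isGlobalLift {a x : T} (ha : IsGlobalLift α β a x) :
    a ∈ β.globalInvariants oneE := by
  intro g
  refine H.eq_of_forall_mul_act_eq fun k y hy => ?_
  have haE : a * oneE (𝔾.d g) ∈ β.D (𝔾.d g) := H.isGlobal.mul_mem_left a (H.oneE_spec _).1
  by_cases hr : 𝔾.r k = 𝔾.r g
  · set m := 𝔾.mul (𝔾.inv g) k
    have hy' : y ∈ α.D (𝔾.d m) := by rwa [d_inv_mul hr]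
    have hmy : β.act m y ∈ β.D (𝔾.d g) := r_inv_mul hr ▸ H.isGlobal.act_mem (H.D_d_subset m hy')
    have hky : β.act k y ∈ β.D (𝔾.r g) := hr ▸ H.isGlobal.act_mem (H.D_d_subset k hy)
    have hk : ∀ z ∈ β.D (𝔾.d m), β.act g (β.act m z) = β.act k z := fun z hz => by
      rw [H.isGlobal.act_act (r_inv_mul hr).symm hz, mul_inv_mul_cancel hr]
    calc β.act g (a * oneE (𝔾.d g)) * β.act k y
        = β.act g (a * oneE (𝔾.d g) * β.act m y) := by
          rw [← hk y (H.D_d_subset m hy'), H.isGlobal.act_mul haE hmy]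
      _ = β.act k (x * y) := by
          rw [mul_assoc, ((H.oneE_spec _).2 _ hmy).1, ha m y hy',
            hk _ (H.D_d_subset m (H.mul_mem_D x hy'))]
      _ = a * oneE (𝔾.r g) * β.act k y := by
          rw [mul_assoc, ((H.oneE_spec _).2 _ hky).1, ha k y hy]
  · rw [H.mul_eq_zero_of_r_ne (Ne.symm hr) (H.isGlobal.act_mem haE)
        (H.isGlobal.act_mem (H.D_d_subset k hy)),
      H.mul_eq_zero_of_r_ne (Ne.symm hr) (H.isGlobal.mul_mem_left a (H.oneE_spec _).1)
        (H.isGlobal.act_mem (H.D_d_subset k hy))]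

lemma exists_isGlobalLift {x : T} (hx : ∀ g, β.act g (x * oneD (𝔾.inv g)) = x * oneD g) :
    ∃ a, IsGlobalLift α β a x := by
  have hcomm (h k : G) :
      Commute (β.act h (oneD (𝔾.d h))) (β.act k (oneD (𝔾.d k))) := by
    simpa only [one_mul, Commute, SemiconjBy] using
      H.act_mul_oneD_mul_act_oneD_comm (x := 1) (by simpa only [one_mul] using H.act_oneD_inv) h k
  obtain ⟨a, ha⟩ := exists_mul_eq_of_compatible Finset.univ
    (u := fun k => β.act k (oneD (𝔾.d k))) (v := fun k => β.act k (x * oneD (𝔾.d k)))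
    (fun k _ => H.act_mul_act_oneD (H.oneD_spec _).1) (fun h _ k _ => hcomm h k)
    (fun k _ => H.act_mul_act_oneD (H.mul_oneD_mem x _))
    (fun h _ k _ => H.act_mul_oneD_mul_act_oneD_comm hx h k)
  refine ⟨a, fun k y hy => ?_⟩
  rw [← H.act_oneD_mul_act hy, ← mul_assoc, ha k (Finset.mem_univ k),
    ← H.isGlobal.act_mul (H.D_d_subset k (H.mul_oneD_mem x _)) (H.D_d_subset k hy), mul_assoc,
    ((H.oneD_spec _).2 y hy).1]

lemma act_mul_oneD_inv_of_mem_invariants {x : T} (hx : x ∈ α.invariants oneD) (g : G) :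
    β.act g (x * oneD (𝔾.inv g)) = x * oneD g :=
  (H.act_eq g _ (H.mul_oneD_mem x _)).trans (hx.2 g)

lemma one_mem_globalInvariants : (1 : T) ∈ β.globalInvariants oneE :=
  H.mem_globalInvariants_of_isGlobalLift H.isGlobalLift_one

lemma add_mem_globalInvariants {a b : T} (ha : a ∈ β.globalInvariants oneE)
    (hb : b ∈ β.globalInvariants oneE) : a + b ∈ β.globalInvariants oneE :=
  H.mem_globalInvariants_of_isGlobalLift
    (H.isGlobalLift_add (H.isGlobalLift_mul_sum_oneD ha) (H.isGlobalLift_mul_sum_oneD hb))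

lemma mul_mem_globalInvariants {a b : T} (ha : a ∈ β.globalInvariants oneE)
    (hb : b ∈ β.globalInvariants oneE) : a * b ∈ β.globalInvariants oneE :=
  H.mem_globalInvariants_of_isGlobalLift
    (H.isGlobalLift_mul (H.isGlobalLift_mul_sum_oneD ha) (H.isGlobalLift_mul_sum_oneD hb))

variable (hRset : Rset = {x : T | ∃ t : T, x = t * ∑ e ∈ 𝔾.identities, oneD e})
include hRset

lemma mul_sum_oneD_of_mem {x : T} (hx : x ∈ Rset) : x * ∑ e ∈ 𝔾.identities, oneD e = x := by
  rw [hRset] at hx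
  obtain ⟨t, rfl⟩ := hx
  rw [mul_assoc, H.sum_oneD_mul_self]

lemma mul_sum_oneD_mem_invariants {a : T} (ha : a ∈ β.globalInvariants oneE) :
    a * ∑ e ∈ 𝔾.identities, oneD e ∈ α.invariants oneD := by
  refine ⟨hRset ▸ ⟨a, rfl⟩, fun g => ?_⟩
  have hR (h : G) : a * (∑ e ∈ 𝔾.identities, oneD e) * oneD h = a * oneD h := by
    rw [mul_assoc, H.sum_oneD_mul (H.oneD_spec h).1]
  have hinv : oneD (𝔾.inv g) ∈ β.D (𝔾.d g) := by simpa only [one_mul] using H.mul_oneD_inv_mem 1 g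
  rw [hR, hR, ← H.act_eq g _ (H.mul_oneD_mem a _)]
  calc β.act g (a * oneD (𝔾.inv g)) = β.act g (a * oneE (𝔾.d g) * oneD (𝔾.inv g)) := by
        rw [mul_assoc, ((H.oneE_spec _).2 _ hinv).1]
    _ = a * oneD g := by
        rw [H.isGlobal.act_mul (H.isGlobal.mul_mem_left a (H.oneE_spec _).1) hinv, ha g,
          H.act_oneD_inv, mul_assoc, ((H.oneE_spec _).2 _ (H.D_subset g (H.oneD_spec g).1)).1]

lemma bijOn_mul_sum_oneD :
    BijOn (· * ∑ e ∈ 𝔾.identities, oneD e) (β.globalInvariants oneE) (α.invariants oneD) := by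
  refine ⟨fun a ha => H.mul_sum_oneD_mem_invariants hRset ha, fun a ha b hb hab => ?_,
    fun x hx => ?_⟩
  · refine H.eq_of_isGlobalLift (H.isGlobalLift_mul_sum_oneD ha) ?_
    rw [show a * _ = b * _ from hab]
    exact H.isGlobalLift_mul_sum_oneD hb
  · obtain ⟨a, ha⟩ := H.exists_isGlobalLift (H.act_mul_oneD_inv_of_mem_invariants hx)
    exact ⟨a, H.mem_globalInvariants_of_isGlobalLift ha,
      (H.mul_sum_oneD_eq_of_isGlobalLift ha).trans (H.mul_sum_oneD_of_mem hRset hx.1)⟩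

end IsGlobalization

theorem invariants_ring_iso_general {G : Type u} [Fintype G]
    [DecidableEq G] (𝔾 : AlgGroupoid G)
    {T : Type u} [Ring T] {Rset : Set T}
    (α : PartialGroupoidAction 𝔾 T Rset)
    (β : PartialGroupoidAction 𝔾 T (Set.univ : Set T)) (hglobal : β.IsGlobal)
    (hDE : ∀ e, 𝔾.isId e → IsIdealIn (α.D e) (β.D e))
    (hcompatD : ∀ g, α.D g = α.D (𝔾.r g) ∩ (β.act g '' α.D (𝔾.d g)))
    (hcompatAct : ∀ g, ∀ a ∈ α.D (𝔾.inv g), β.act g a = α.act g a)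
    (hspans : ∀ g, β.D g
      = ↑(AddSubgroup.closure (⋃ h ∈ {h : G | 𝔾.r h = 𝔾.r g}, β.act h '' α.D (𝔾.d h))))
    (oneD oneE : G → T)
    (honeD : ∀ g, IsIdentityElem (oneD g) (α.D g))
    (honeE : ∀ g, IsIdentityElem (oneE g) (β.D g))
    (hcentD : ∀ g (t : T), oneD g * t = t * oneD g)
    (horthE : ∀ e f, 𝔾.isId e → 𝔾.isId f → e ≠ f → ∀ x ∈ β.D e, ∀ y ∈ β.D f, x * y = 0)
    (h1T : (1 : T) = ∑ e ∈ Finset.univ.filter (fun e => 𝔾.isId e), oneE e)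
    (hRset : Rset
      = {x : T | ∃ t : T, x = t * ∑ e ∈ Finset.univ.filter (fun e => 𝔾.isId e), oneD e})
    :
    let G₀ : Finset G := Finset.univ.filter (fun e => 𝔾.isId e)
    let oneR : T := ∑ e ∈ G₀, oneD e
    let Rα : Set T :=
      Rset ∩ {x : T | ∀ g : G, α.act g (x * oneD (𝔾.inv g)) = x * oneD g}
    let Tβ : Set T := {a : T | ∀ g : G, β.act g (a * oneE (𝔾.d g)) = a * oneE (𝔾.r g)}
    ∃ ψ : T → T,
      Set.BijOn ψ Rα Tβ ∧
      (∀ x ∈ Rα, ∀ y ∈ Rα, ψ (x + y) = ψ x + ψ y ∧ ψ (x * y) = ψ x * ψ y) ∧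
      ψ oneR = 1 ∧
      (∀ x ∈ Rα, ψ x * oneR = x) ∧
      (∀ a ∈ Tβ, ψ (a * oneR) = a) := by
  intro G₀ oneR Rα Tβ
  have H : IsGlobalization α β oneD oneE :=
    ⟨hglobal, hDE, hcompatD, hcompatAct, hspans, honeD, honeE, hcentD, horthE, h1T⟩
  have hbij : BijOn (· * oneR) Tβ Rα := H.bijOn_mul_sum_oneD hRset
  have hinv : InvOn (invFunOn (· * oneR) Tβ) (· * oneR) Tβ Rα := hbij.invOn_invFunOn
  set ψ := invFunOn (· * oneR) Tβ
  have hψ : MapsTo ψ Rα Tβ := hbij.surjOn.mapsTo_invFunOn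
  have hψ_mul : ∀ x ∈ Rα, ψ x * oneR = x := fun x hx => hinv.2 hx
  have hψ_eq {a x : T} (ha : a ∈ Tβ) (hx : a * oneR = x) : ψ x = a := hx ▸ hinv.1 ha
  refine ⟨ψ, hbij.symm hinv.symm, fun x hx y hy => ⟨?_, ?_⟩,
    hψ_eq H.one_mem_globalInvariants (one_mul _), hψ_mul, fun a ha => hinv.1 ha⟩
  · refine hψ_eq (H.add_mem_globalInvariants (hψ hx) (hψ hy)) ?_
    rw [add_mul, hψ_mul x hx, hψ_mul y hy]
  · refine hψ_eq (H.mul_mem_globalInvariants (hψ hx) (hψ hy)) ?_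
    calc ψ x * ψ y * oneR = ψ x * oneR * (ψ y * oneR) :=
          (H.mul_sum_oneD_mul_mul_sum_oneD _ _).symm
      _ = x * y := by rw [hψ_mul x hx, hψ_mul y hy]

/-- **Theorem 4.6**: under the standing hypotheses (`G` finite, `β` a
globalization of `α` acting on `T = ⊕_{e ∈ G₀} E_e`, `R = T·1_R` with
`1_R = ∑_{e ∈ G₀} 1_e`), the subrings of invariants `R^α` and `T^β` are
isomorphic as rings; the inverse isomorphism `T^β → R^α` is given by
multiplication by `1_R` (which uniquely determines the isomorphism `ψ`,
given in the paper by the explicit formula `x ↦ ∑_{e ∈ G₀} ψ_e(x)`). -/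
theorem invariants_ring_iso {G : Type u} [Nonempty G] [Fintype G]
    [DecidableEq G] (𝔾 : AlgGroupoid G)
    {T : Type u} [Ring T] {Rset : Set T}
    (α : PartialGroupoidAction 𝔾 T Rset)
    (β : PartialGroupoidAction 𝔾 T (Set.univ : Set T)) (hglobal : β.IsGlobal)
    (hDE : ∀ e, 𝔾.isId e → IsIdealIn (α.D e) (β.D e))
    (hcompatD : ∀ g, α.D g = α.D (𝔾.r g) ∩ (β.act g '' α.D (𝔾.d g)))
    (hcompatAct : ∀ g, ∀ a ∈ α.D (𝔾.inv g), β.act g a = α.act g a)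
    (hspans : ∀ g, β.D g
      = ↑(AddSubgroup.closure (⋃ h ∈ {h : G | 𝔾.r h = 𝔾.r g}, β.act h '' α.D (𝔾.d h))))
    (oneD oneE : G → T)
    (honeD : ∀ g, IsIdentityElem (oneD g) (α.D g))
    (honeE : ∀ g, IsIdentityElem (oneE g) (β.D g))
    (hcentD : ∀ g (t : T), oneD g * t = t * oneD g)
    (hcentE : ∀ g (t : T), oneE g * t = t * oneE g)
    (horthE : ∀ e f, 𝔾.isId e → 𝔾.isId f → e ≠ f → ∀ x ∈ β.D e, ∀ y ∈ β.D f, x * y = 0)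
    (h1T : (1 : T) = ∑ e ∈ Finset.univ.filter (fun e => 𝔾.isId e), oneE e)
    (hRset : Rset
      = {x : T | ∃ t : T, x = t * ∑ e ∈ Finset.univ.filter (fun e => 𝔾.isId e), oneD e})
    :
    let G₀ : Finset G := Finset.univ.filter (fun e => 𝔾.isId e)
    let oneR : T := ∑ e ∈ G₀, oneD e
    let Rα : Set T :=
      Rset ∩ {x : T | ∀ g : G, α.act g (x * oneD (𝔾.inv g)) = x * oneD g}
    let Tβ : Set T := {a : T | ∀ g : G, β.act g (a * oneE (𝔾.d g)) = a * oneE (𝔾.r g)}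
    ∃ ψ : T → T,
      Set.BijOn ψ Rα Tβ ∧
      (∀ x ∈ Rα, ∀ y ∈ Rα, ψ (x + y) = ψ x + ψ y ∧ ψ (x * y) = ψ x * ψ y) ∧
      ψ oneR = 1 ∧
      (∀ x ∈ Rα, ψ x * oneR = x) ∧
      (∀ a ∈ Tβ, ψ (a * oneR) = a) :=
  invariants_ring_iso_general 𝔾 α β hglobal hDE hcompatD hcompatAct hspans oneD oneE honeD honeE
    hcentD horthE h1T hRset
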